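/- Given a positive semidefinite symmetric matrix P ∈ R^{q×q} and ρ a density matrix, the fidelity F(ρ, P) equals the supremum of ⟨[[0, I/2],[I/2, 0]], X⟩ over block matrices X = [[ρ, R],[S, P]] ∈ R^{2q×2q} with X positive semidefinite, where ⟨A,B⟩ = Tr(AᵀB). Specifically: sup over R with [[ρ,R],[Rᵀ,P]] ⪰ 0 of Tr((R+Rᵀ)/2) equals Tr√(ρ^{1/2} P ρ^{1/2}). -/

import Mathlib

open Matrix

namespace Matrix.PosSemidef
open scoped ComplexOrder
variable {n : Type*} [Fintype n] [DecidableEq n] {𝕜 : Type*} [RCLike 𝕜] {A : Matrix n n 𝕜}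
  (hA : A.PosSemidef)

/-- The positive semidefinite square root of a positive semidefinite matrix
(restored verbatim from the Mathlib of December 2024, where it has since been removed). -/
noncomputable def sqrt : Matrix n n 𝕜 :=
  (hA.1.eigenvectorUnitary : Matrix n n 𝕜) * diagonal ((↑) ∘ (√·) ∘ hA.1.eigenvalues) *
    (star hA.1.eigenvectorUnitary : Matrix n n 𝕜)

lemma posSemidef_sqrt : PosSemidef hA.sqrt := by
  apply PosSemidef.mul_mul_conjTranspose_same
  refine posSemidef_diagonal_iff.mpr fun i ↦ ?_
  rw [Function.comp_apply, RCLike.nonneg_iff]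
  constructor
  · simp only [RCLike.ofReal_re]
    exact Real.sqrt_nonneg _
  · simp only [RCLike.ofReal_im]

end Matrix.PosSemidef

/-- The fidelity `F(P,Q) = Tr √(P^{1/2} Q P^{1/2})` of positive semidefinite matrices. -/
noncomputable def fidelity {n : ℕ} {P Q : Matrix (Fin n) (Fin n) ℝ}
    (hP : P.PosSemidef) (hQ : Q.PosSemidef) : ℝ :=
  (Matrix.PosSemidef.sqrt (show (hP.sqrt * Q * hP.sqrt).PosSemidef by
    have h := hQ.mul_mul_conjTranspose_same hP.sqrt
    rwa [hP.posSemidef_sqrt.isHermitian.eq] at h)).trace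

namespace FidelityAux

variable {n : Type*} [Fintype n] [DecidableEq n]
variable {X : Matrix n n ℝ} (hX : X.IsHermitian)

/-- functional calculus for a hermitian real matrix -/
noncomputable def fc (f : ℝ → ℝ) : Matrix n n ℝ :=
  (hX.eigenvectorUnitary : Matrix n n ℝ) *
    Matrix.diagonal (fun i => f (hX.eigenvalues i)) *
    star (hX.eigenvectorUnitary : Matrix n n ℝ)

lemma star_mul_selfU : star (hX.eigenvectorUnitary : Matrix n n ℝ) *
    (hX.eigenvectorUnitary : Matrix n n ℝ) = 1 :=
  mem_unitaryGroup_iff'.mp hX.eigenvectorUnitary.2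

lemma mul_star_selfU : (hX.eigenvectorUnitary : Matrix n n ℝ) *
    star (hX.eigenvectorUnitary : Matrix n n ℝ) = 1 :=
  mem_unitaryGroup_iff.mp hX.eigenvectorUnitary.2

lemma fc_mul (f g : ℝ → ℝ) :
    fc hX f * fc hX g = fc hX (fun x => f x * g x) := by
  unfold fc
  set U := (hX.eigenvectorUnitary : Matrix n n ℝ)
  have h1 : star U * U = 1 := star_mul_selfU hX
  calc U * diagonal (fun i => f (hX.eigenvalues i)) * star U *
        (U * diagonal (fun i => g (hX.eigenvalues i)) * star U)
      = U * (diagonal (fun i => f (hX.eigenvalues i)) * ((star U * U) *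
          diagonal (fun i => g (hX.eigenvalues i)))) * star U := by
        simp only [Matrix.mul_assoc]
    _ = U * diagonal (fun i => f (hX.eigenvalues i) * g (hX.eigenvalues i)) * star U := by
        rw [h1, Matrix.one_mul, Matrix.diagonal_mul_diagonal, Matrix.mul_assoc]

lemma fc_congr {f g : ℝ → ℝ} (h : ∀ i, f (hX.eigenvalues i) = g (hX.eigenvalues i)) :
    fc hX f = fc hX g := by
  unfold fc
  congr 2
  exact congrArg _ (funext h)

lemma fc_one : fc hX (fun _ => 1) = 1 := by
  unfold fc
  rw [show (Matrix.diagonal (fun _ : n => (1:ℝ))) = 1 from Matrix.diagonal_one,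
    Matrix.mul_one, mul_star_selfU hX]

lemma fc_id : fc hX (fun x => x) = X := by
  unfold fc
  conv_rhs => rw [hX.spectral_theorem]
  congr 2

lemma fc_smul (c : ℝ) (f : ℝ → ℝ) : fc hX (fun x => c * f x) = c • fc hX f := by
  unfold fc
  rw [show (Matrix.diagonal fun i => c * f (hX.eigenvalues i)) =
      c • Matrix.diagonal (fun i => f (hX.eigenvalues i)) by
    rw [← Matrix.diagonal_smul]; congr 1]
  rw [Matrix.mul_smul, Matrix.smul_mul]

lemma fc_const (c : ℝ) : fc hX (fun _ => c) = c • (1 : Matrix n n ℝ) := by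
  rw [show (fun _ : ℝ => c) = fun x : ℝ => c * 1 by funext; ring, fc_smul, fc_one]

lemma fc_add (f g : ℝ → ℝ) : fc hX (fun x => f x + g x) = fc hX f + fc hX g := by
  unfold fc
  rw [show (Matrix.diagonal fun i => f (hX.eigenvalues i) + g (hX.eigenvalues i)) =
      Matrix.diagonal (fun i => f (hX.eigenvalues i)) +
      Matrix.diagonal (fun i => g (hX.eigenvalues i)) from (Matrix.diagonal_add _ _).symm,
    Matrix.mul_add, Matrix.add_mul]

lemma fc_sub (f g : ℝ → ℝ) : fc hX (fun x => f x - g x) = fc hX f - fc hX g := by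
  unfold fc
  rw [show (Matrix.diagonal fun i => f (hX.eigenvalues i) - g (hX.eigenvalues i)) =
      Matrix.diagonal (fun i => f (hX.eigenvalues i)) -
      Matrix.diagonal (fun i => g (hX.eigenvalues i)) from (Matrix.diagonal_sub _ _).symm,
    Matrix.mul_sub, Matrix.sub_mul]

lemma fc_isHermitian (f : ℝ → ℝ) : (fc hX f).IsHermitian := by
  unfold fc
  rw [Matrix.star_eq_conjTranspose]
  exact Matrix.isHermitian_mul_mul_conjTranspose _ (Matrix.isHermitian_diagonal _)

lemma fc_herm (f : ℝ → ℝ) : (fc hX f)ᴴ = fc hX f := fc_isHermitian hX f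

lemma fc_transpose (f : ℝ → ℝ) : (fc hX f)ᵀ = fc hX f := by
  rw [← Matrix.conjTranspose_eq_transpose_of_trivial]
  exact fc_herm hX f

lemma fc_posSemidef {f : ℝ → ℝ} (h : ∀ i, 0 ≤ f (hX.eigenvalues i)) :
    (fc hX f).PosSemidef := by
  have := (Matrix.PosSemidef.diagonal (R := ℝ) (d := fun i => f (hX.eigenvalues i))
    h).mul_mul_conjTranspose_same (hX.eigenvectorUnitary : Matrix n n ℝ)
  rw [← Matrix.star_eq_conjTranspose] at this
  exact this

lemma fc_trace (f : ℝ → ℝ) : (fc hX f).trace = ∑ i, f (hX.eigenvalues i) := by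
  unfold fc
  rw [Matrix.trace_mul_cycle, star_mul_selfU hX, Matrix.one_mul, Matrix.trace_diagonal]

lemma trace_nonneg' {A : Matrix n n ℝ} (hA : A.PosSemidef) : 0 ≤ A.trace := by
  rw [Matrix.trace]
  refine Finset.sum_nonneg fun i _ => ?_
  have := hA.dotProduct_mulVec_nonneg (Pi.single i 1)
  simpa [dotProduct, Matrix.mulVec, Pi.single_apply] using this

lemma trace_mul_nonneg {A B : Matrix n n ℝ} (hA : A.PosSemidef) (hB : B.PosSemidef) :
    0 ≤ (A * B).trace := by
  obtain ⟨C, rfl⟩ : ∃ C : Matrix n n ℝ, A = Cᴴ * C := by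
    open scoped MatrixOrder in exact CStarAlgebra.nonneg_iff_eq_star_mul_self.mp hA.nonneg
  rw [← Matrix.trace_mul_cycle]
  exact trace_nonneg' (hB.mul_mul_conjTranspose_same C)

lemma trace_mul_le {A B C : Matrix n n ℝ} (hA : A.PosSemidef)
    (h : (C - B).PosSemidef) : (A * B).trace ≤ (A * C).trace := by
  have := trace_mul_nonneg hA h
  rw [Matrix.mul_sub, Matrix.trace_sub] at this
  linarith

end FidelityAux

namespace FidelityAux

lemma r1 {x s : ℝ} (hx : 0 ≤ x) (hs : 0 < s) : Real.sqrt (x + s^2) ≤ Real.sqrt x + s := by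
  have h1 : x + s^2 ≤ (Real.sqrt x + s)^2 := by
    have : Real.sqrt x ^ 2 = x := Real.sq_sqrt hx
    nlinarith [Real.sqrt_nonneg x]
  calc Real.sqrt (x + s^2) ≤ Real.sqrt ((Real.sqrt x + s)^2) := Real.sqrt_le_sqrt h1
    _ = Real.sqrt x + s := Real.sqrt_sq (by positivity)

lemma r0 {x s : ℝ} (hx : 0 ≤ x) (hs : 0 < s) : Real.sqrt x ≤ Real.sqrt (x + s^2) :=
  Real.sqrt_le_sqrt (by nlinarith)

lemma r2 {x s : ℝ} (hx : 0 ≤ x) (hs : 0 < s) : (Real.sqrt (x + s^2) - Real.sqrt x)^2 ≤ s^2 := by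
  have h1 := r1 hx hs
  have h2 := r0 hx hs
  nlinarith

lemma rpos {x s : ℝ} (hx : 0 ≤ x) (hs : 0 < s) : 0 < Real.sqrt (x + s^2) :=
  Real.sqrt_pos.mpr (by positivity)

lemma r3 {x s : ℝ} (hx : 0 ≤ x) (hs : 0 < s) : (Real.sqrt (x + s^2))⁻¹ ≤ s⁻¹ := by
  have h1 : s ≤ Real.sqrt (x + s^2) := by
    calc s = Real.sqrt (s^2) := (Real.sqrt_sq hs.le).symm
      _ ≤ Real.sqrt (x + s^2) := Real.sqrt_le_sqrt (by linarith)
  exact inv_anti₀ hs h1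

lemma r4 {x s : ℝ} (hx : 0 ≤ x) (hs : 0 < s) : x * (Real.sqrt (x + s^2))⁻¹ ≤ Real.sqrt x := by
  rw [mul_inv_le_iff₀ (rpos hx hs)]
  calc x = Real.sqrt x * Real.sqrt x := (Real.mul_self_sqrt hx).symm
    _ ≤ Real.sqrt x * Real.sqrt (x + s^2) := by
        exact mul_le_mul_of_nonneg_left (r0 hx hs) (Real.sqrt_nonneg x)

lemma r5 {x s : ℝ} (hx : 0 ≤ x) (hs : 0 < s) :
    Real.sqrt x - s ≤ x * (Real.sqrt (x + s^2))⁻¹ := by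
  rcases le_or_gt (Real.sqrt x) s with h | h
  · have : 0 ≤ x * (Real.sqrt (x + s^2))⁻¹ := by positivity
    linarith
  · have hy := r1 hx hs
    have hpos : (0:ℝ) < Real.sqrt x + s := by positivity
    have h6 : (Real.sqrt x + s)⁻¹ ≤ (Real.sqrt (x + s^2))⁻¹ := inv_anti₀ (rpos hx hs) hy
    have h7 : x * (Real.sqrt x + s)⁻¹ ≤ x * (Real.sqrt (x + s^2))⁻¹ :=
      mul_le_mul_of_nonneg_left h6 hx
    have h8 : Real.sqrt x - s ≤ x / (Real.sqrt x + s) := by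
      rw [le_div_iff₀ hpos]
      have hq : Real.sqrt x * Real.sqrt x = x := Real.mul_self_sqrt hx
      nlinarith
    rw [div_eq_mul_inv] at h8
    linarith

end FidelityAux

namespace FidelityAux

open Matrix

lemma r6 {x s : ℝ} (hx : 0 ≤ x) (hs : 0 < s) :
    0 ≤ 1 - (Real.sqrt (x + s^2))⁻¹ * x * (Real.sqrt (x + s^2))⁻¹ := by
  have hsq : Real.sqrt (x + s^2) * Real.sqrt (x + s^2) = x + s^2 :=
    Real.mul_self_sqrt (by positivity)
  have h1 : (Real.sqrt (x + s^2))⁻¹ * x * (Real.sqrt (x + s^2))⁻¹ = x / (x + s^2) := by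
    rw [mul_comm _ x, mul_assoc, ← mul_inv, hsq, div_eq_mul_inv]
  rw [sub_nonneg, h1]
  exact div_le_one_of_le₀ (by nlinarith) (by positivity)

variable {q : ℕ} {ρ P : Matrix (Fin q) (Fin q) ℝ}

lemma hX_psd (hρ : ρ.PosSemidef) (hP : P.PosSemidef) :
    (hρ.sqrt * P * hρ.sqrt).PosSemidef := by
  have h := hP.mul_mul_conjTranspose_same hρ.sqrt
  rwa [hρ.posSemidef_sqrt.isHermitian.eq] at h

lemma sqrt_eq_fc {n : Type*} [Fintype n] [DecidableEq n] {M : Matrix n n ℝ}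
    (hM : M.PosSemidef) : hM.sqrt = fc hM.1 Real.sqrt := by
  unfold Matrix.PosSemidef.sqrt fc
  simp [RCLike.ofReal_real_eq_id]
  rfl

lemma psd_smul {n : Type*} [Fintype n] {A : Matrix n n ℝ} (hA : A.PosSemidef)
    {c : ℝ} (hc : 0 ≤ c) : (c • A).PosSemidef := by
  exact hA.smul hc

lemma pad_psd {n : Type*} [Fintype n] [DecidableEq n] {A : Matrix n n ℝ}
    (hA : A.PosSemidef) :
    (Matrix.fromBlocks A 0 0 (0 : Matrix n n ℝ)).PosSemidef := by
  rw [Matrix.posSemidef_iff_dotProduct_mulVec]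
  constructor
  · show _ = _
    rw [Matrix.fromBlocks_conjTranspose, hA.1.eq, Matrix.conjTranspose_zero]
  · intro x
    have hx : x = Sum.elim (x ∘ Sum.inl) (x ∘ Sum.inr) := by
      funext i; cases i <;> rfl
    rw [hx, Matrix.fromBlocks_mulVec]
    simp only [Matrix.zero_mulVec, add_zero, zero_add, star_trivial]
    rw [sumElim_dotProduct_sumElim]
    have := hA.dotProduct_mulVec_nonneg (x ∘ Sum.inl)
    rw [star_trivial] at this
    simpa using this

end FidelityAux

namespace FidelityAux

open Matrix

variable {q : ℕ} {ρ P : Matrix (Fin q) (Fin q) ℝ}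

lemma lower_bound (hρ : ρ.PosSemidef) (hP : P.PosSemidef) {s : ℝ} (hs : 0 < s) :
    ∃ R : Matrix (Fin q) (Fin q) ℝ, (Matrix.fromBlocks ρ R Rᵀ P).PosSemidef ∧
      (∑ i, Real.sqrt ((hX_psd hρ hP).1.eigenvalues i)) - (q : ℝ) * s ≤ R.trace := by
  have hXps := hX_psd hρ hP
  set hXH := hXps.1 with hXHdef
  have hXe : ∀ i, 0 ≤ hXH.eigenvalues i := hXps.eigenvalues_nonneg
  set A := fc hρ.1 Real.sqrt with hAdef
  set B := fc hP.1 Real.sqrt with hBdef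
  set GX := fc hXH (fun x => (Real.sqrt (x + s^2))⁻¹) with hGXdef
  set K := GX * A * B with hKdef
  set R := A * K * B with hRdef
  have hAA : A * A = ρ := by rw [hAdef, ← sqrt_eq_fc hρ]; rw [sqrt_eq_fc hρ, fc_mul,
      fc_congr hρ.1 (g := fun x => x) (fun i => Real.mul_self_sqrt (hρ.eigenvalues_nonneg i)), fc_id]
  have hBB : B * B = P := by rw [hBdef, ← sqrt_eq_fc hP]; rw [sqrt_eq_fc hP, fc_mul,
      fc_congr hP.1 (g := fun x => x) (fun i => Real.mul_self_sqrt (hP.eigenvalues_nonneg i)), fc_id]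
  have hAsq : A = hρ.sqrt := (sqrt_eq_fc hρ).symm
  have hKH : Kᴴ = B * A * GX := by
    rw [hKdef, Matrix.conjTranspose_mul, Matrix.conjTranspose_mul,
      fc_herm, fc_herm, fc_herm, ← Matrix.mul_assoc]
  have hKKH : K * Kᴴ =
      fc hXH (fun x => ((Real.sqrt (x + s^2))⁻¹ * x) * (Real.sqrt (x + s^2))⁻¹) := by
    have h1 : K * Kᴴ = GX * (A * (B * B) * A) * GX := by rw [hKH, hKdef]; noncomm_ring
    rw [hBB, hAsq, ← fc_id hXH, hGXdef, fc_mul, fc_mul] at h1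
    exact h1
  have h1K : (1 - K * Kᴴ).PosSemidef := by
    rw [hKKH, ← fc_one hXH, ← fc_sub]
    exact fc_posSemidef hXH (fun i => by
      simpa [mul_assoc] using r6 (hXe i) hs)
  -- middle matrix
  set Nmid := Matrix.fromBlocks (1 : Matrix (Fin q) (Fin q) ℝ) K Kᴴ 1 with hNmiddef
  have hsplit : Nmid = (Matrix.fromBlocks Kᴴ 1 0 0)ᴴ * (Matrix.fromBlocks Kᴴ 1 0 0) +
      Matrix.fromBlocks (1 - K * Kᴴ) 0 0 (0 : Matrix (Fin q) (Fin q) ℝ) := by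
    rw [Matrix.fromBlocks_conjTranspose, Matrix.fromBlocks_multiply]
    simp only [Matrix.conjTranspose_conjTranspose, Matrix.conjTranspose_one,
      Matrix.conjTranspose_zero, Matrix.mul_one, Matrix.one_mul, Matrix.mul_zero,
      Matrix.zero_mul, add_zero, zero_add]
    rw [Matrix.fromBlocks_add]
    simp only [add_zero, zero_add, hNmiddef, add_sub_cancel]
  have hNmid : Nmid.PosSemidef := by
    rw [hsplit]
    exact (Matrix.posSemidef_conjTranspose_mul_self _).add (pad_psd h1K)
  set L := Matrix.fromBlocks A 0 0 B with hLdef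
  have hLH : Lᴴ = L := by
    rw [hLdef, Matrix.fromBlocks_conjTranspose, Matrix.conjTranspose_zero, fc_herm, fc_herm]
  have hfb : L * Nmid * Lᴴ = Matrix.fromBlocks ρ R Rᵀ P := by
    rw [hLH, hLdef, hNmiddef, Matrix.fromBlocks_multiply, Matrix.fromBlocks_multiply]
    simp only [Matrix.mul_one, Matrix.one_mul, Matrix.mul_zero, Matrix.zero_mul,
      add_zero, zero_add]
    have hRt : Rᵀ = B * Kᴴ * A := by
      rw [hRdef, Matrix.transpose_mul, Matrix.transpose_mul,
        ← Matrix.conjTranspose_eq_transpose_of_trivial K,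
        ← Matrix.conjTranspose_eq_transpose_of_trivial A,
        ← Matrix.conjTranspose_eq_transpose_of_trivial B,
        fc_herm, fc_herm, ← Matrix.mul_assoc]
    rw [hRt, hAA, hBB, ← Matrix.mul_assoc, ← Matrix.mul_assoc]
    rw [show A * GX * A * B * B = R from by rw [hRdef, hKdef]; noncomm_ring]
  refine ⟨R, ?_, ?_⟩
  · rw [← hfb]; exact hNmid.mul_mul_conjTranspose_same L
  · have hR2 : R = A * (GX * (A * (B * B))) := by rw [hRdef, hKdef]; noncomm_ring
    rw [hBB] at hR2
    have htr : R.trace = (fc hXH (fun x => (Real.sqrt (x + s^2))⁻¹ * x)).trace := by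
      rw [hR2, Matrix.trace_mul_comm]
      have : GX * (A * P) * A = GX * (A * P * A) := by noncomm_ring
      rw [this, hAsq]
      conv_lhs => rw [← fc_id hXH, hGXdef, fc_mul]
    rw [htr, fc_trace]
    have hsum : ∀ i ∈ Finset.univ, Real.sqrt (hXH.eigenvalues i) - s ≤
        (Real.sqrt (hXH.eigenvalues i + s^2))⁻¹ * hXH.eigenvalues i := by
      intro i _
      rw [mul_comm]
      exact r5 (hXe i) hs
    calc (∑ i, Real.sqrt (hXH.eigenvalues i)) - (q:ℝ) * s
        = ∑ i, (Real.sqrt (hXH.eigenvalues i) - s) := by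
          rw [Finset.sum_sub_distrib, Finset.sum_const, Finset.card_univ,
            Fintype.card_fin, nsmul_eq_mul]
      _ ≤ _ := Finset.sum_le_sum hsum

end FidelityAux

namespace FidelityAux

open Matrix

variable {q : ℕ} {ρ P : Matrix (Fin q) (Fin q) ℝ}

lemma upper_core (hρ : ρ.PosSemidef) (hP : P.PosSemidef) (R : Matrix (Fin q) (Fin q) ℝ)
    (hfeas : (Matrix.fromBlocks ρ R Rᵀ P).PosSemidef) {t s : ℝ} (ht : 0 < t) (hs : 0 < s) :
    R.trace + R.trace ≤
      ((∑ i, Real.sqrt ((hX_psd hρ hP).1.eigenvalues i)) + (q : ℝ) * s)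
      + ((1 + t) * (∑ i, Real.sqrt ((hX_psd hρ hP).1.eigenvalues i))
        + (1 + t⁻¹) * (s⁻¹ * (s^2 * P.trace))) := by
  have hXps := hX_psd hρ hP
  have hXH := hXps.1
  have hρe : ∀ i, 0 ≤ hρ.1.eigenvalues i := hρ.eigenvalues_nonneg
  have hXe : ∀ i, 0 ≤ hXH.eigenvalues i := hXps.eigenvalues_nonneg
  set A := fc hρ.1 Real.sqrt with hAdef
  set Aδ := fc hρ.1 (fun x => Real.sqrt (x + s^2)) with hAδdef
  set Gρ := fc hρ.1 (fun x => (Real.sqrt (x + s^2))⁻¹) with hGρdef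
  set E := fc hρ.1 (fun x => Real.sqrt (x + s^2) - Real.sqrt x) with hEdef
  set H' := fc hXH (fun x => Real.sqrt (x + s^2)) with hHdef
  set GX := fc hXH (fun x => (Real.sqrt (x + s^2))⁻¹) with hGXdef
  set G := fc hXH (fun x => Real.sqrt (Real.sqrt (x + s^2))) with hGdef
  set G' := fc hXH (fun x => (Real.sqrt (Real.sqrt (x + s^2)))⁻¹) with hG'def
  have pAδGρ : Aδ * Gρ = 1 := by
    rw [hAδdef, hGρdef, fc_mul,
      fc_congr hρ.1 (g := fun _ => 1) (fun i => mul_inv_cancel₀ (ne_of_gt (rpos (hρe i) hs))),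
      fc_one]
  have pGρAδ : Gρ * Aδ = 1 := by
    rw [hAδdef, hGρdef, fc_mul,
      fc_congr hρ.1 (g := fun _ => 1) (fun i => inv_mul_cancel₀ (ne_of_gt (rpos (hρe i) hs))),
      fc_one]
  have pGG : G * G = H' := by
    rw [hGdef, hHdef, fc_mul,
      fc_congr hXH (g := fun x => Real.sqrt (x + s^2))
        (fun i => Real.mul_self_sqrt (Real.sqrt_nonneg _))]
  have pG'G' : G' * G' = GX := by
    rw [hG'def, hGXdef, fc_mul,
      fc_congr hXH (g := fun x => (Real.sqrt (x + s^2))⁻¹)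
        (fun i => by rw [← mul_inv, Real.mul_self_sqrt (Real.sqrt_nonneg _)])]
  have pGG' : G * G' = 1 := by
    rw [hGdef, hG'def, fc_mul,
      fc_congr hXH (g := fun _ => 1)
        (fun i => mul_inv_cancel₀ (ne_of_gt (Real.sqrt_pos.mpr (rpos (hXe i) hs)))),
      fc_one]
  have pG'G : G' * G = 1 := by
    rw [hGdef, hG'def, fc_mul,
      fc_congr hXH (g := fun _ => 1)
        (fun i => inv_mul_cancel₀ (ne_of_gt (Real.sqrt_pos.mpr (rpos (hXe i) hs)))),
      fc_one]
  have pAE : Aδ = A + E := by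
    rw [hAdef, hEdef, ← fc_add, hAδdef]
    exact fc_congr hρ.1 (fun i => by ring)
  obtain ⟨N, hN⟩ : ∃ N : Matrix (Fin q ⊕ Fin q) (Fin q ⊕ Fin q) ℝ,
      Matrix.fromBlocks ρ R Rᵀ P = Nᴴ * N := by
    open scoped MatrixOrder in exact CStarAlgebra.nonneg_iff_eq_star_mul_self.mp hfeas.nonneg
  set N₁ := N.submatrix id Sum.inl with hN₁
  set N₂ := N.submatrix id Sum.inr with hN₂
  have hblock : ∀ (i j : Fin q) (a b : Fin q ⊕ Fin q),
      (Matrix.fromBlocks ρ R Rᵀ P) a b = (Nᴴ * N) a b := fun i j a b => by rw [hN]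
  have hρN : N₁ᴴ * N₁ = ρ := by
    ext i j
    have h := congrFun (congrFun hN (Sum.inl i)) (Sum.inl j)
    simp only [Matrix.fromBlocks_apply₁₁] at h
    rw [Matrix.mul_apply, h, Matrix.mul_apply]
    exact Finset.sum_congr rfl (fun k _ => by
      simp [hN₁, hN₂, Matrix.conjTranspose_apply, Matrix.submatrix_apply])
  have hRN : N₁ᴴ * N₂ = R := by
    ext i j
    have h := congrFun (congrFun hN (Sum.inl i)) (Sum.inr j)
    simp only [Matrix.fromBlocks_apply₁₂] at h
    rw [Matrix.mul_apply, h, Matrix.mul_apply]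
    exact Finset.sum_congr rfl (fun k _ => by
      simp [hN₁, hN₂, Matrix.conjTranspose_apply, Matrix.submatrix_apply])
  have hRtN : N₂ᴴ * N₁ = Rᵀ := by
    ext i j
    have h := congrFun (congrFun hN (Sum.inr i)) (Sum.inl j)
    simp only [Matrix.fromBlocks_apply₂₁] at h
    rw [Matrix.mul_apply, h, Matrix.mul_apply]
    exact Finset.sum_congr rfl (fun k _ => by
      simp [hN₁, hN₂, Matrix.conjTranspose_apply, Matrix.submatrix_apply])
  have hPN : N₂ᴴ * N₂ = P := by
    ext i j
    have h := congrFun (congrFun hN (Sum.inr i)) (Sum.inr j)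
    simp only [Matrix.fromBlocks_apply₂₂] at h
    rw [Matrix.mul_apply, h, Matrix.mul_apply]
    exact Finset.sum_congr rfl (fun k _ => by
      simp [hN₁, hN₂, Matrix.conjTranspose_apply, Matrix.submatrix_apply])
  set T := Gρ * G with hT
  set T' := Aδ * G' with hT'
  have hTh : Tᴴ = G * Gρ := by
    rw [hT, Matrix.conjTranspose_mul, hGdef, hGρdef, fc_herm, fc_herm]
  have hT'h : T'ᴴ = G' * Aδ := by
    rw [hT', Matrix.conjTranspose_mul, hG'def, hAδdef, fc_herm, fc_herm]
  have hTT'h : T * T'ᴴ = 1 := by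
    rw [hT, hT'h, Matrix.mul_assoc, ← Matrix.mul_assoc G, pGG', Matrix.one_mul, pGρAδ]
  have hT'Th : T' * Tᴴ = 1 := by
    rw [hT', hTh, Matrix.mul_assoc, ← Matrix.mul_assoc G', pG'G, Matrix.one_mul, pAδGρ]
  have hTTh : T * Tᴴ = Gρ * (H' * Gρ) := by
    rw [hT, hTh, Matrix.mul_assoc, ← Matrix.mul_assoc G G Gρ, pGG]
  have hT'T'h : T' * T'ᴴ = Aδ * (GX * Aδ) := by
    rw [hT', hT'h, Matrix.mul_assoc, ← Matrix.mul_assoc G' G' Aδ, pG'G']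
  have hcs0 : (0:ℝ) ≤ ((N₁ * T - N₂ * T')ᴴ * (N₁ * T - N₂ * T')).trace :=
    trace_nonneg' (Matrix.posSemidef_conjTranspose_mul_self _)
  have hexp : (N₁ * T - N₂ * T')ᴴ * (N₁ * T - N₂ * T') =
      Tᴴ * (N₁ᴴ * N₁) * T - Tᴴ * (N₁ᴴ * N₂) * T' - T'ᴴ * (N₂ᴴ * N₁) * T
        + T'ᴴ * (N₂ᴴ * N₂) * T' := by
    simp only [Matrix.conjTranspose_sub, Matrix.conjTranspose_mul,
      Matrix.sub_mul, Matrix.mul_sub, Matrix.mul_assoc]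
    abel
  rw [hρN, hRN, hRtN, hPN] at hexp
  rw [hexp, Matrix.trace_add, Matrix.trace_sub, Matrix.trace_sub] at hcs0
  have hcross1 : (Tᴴ * R * T').trace = R.trace := by
    rw [Matrix.trace_mul_cycle, hT'Th, Matrix.one_mul]
  have hcross2 : (T'ᴴ * Rᵀ * T).trace = R.trace := by
    rw [Matrix.trace_mul_cycle, hTT'h, Matrix.one_mul, Matrix.trace_transpose]
  have ht1 : (Tᴴ * ρ * T).trace ≤ (∑ i, Real.sqrt (hXps.1.eigenvalues i)) + (q:ℝ) * s := by
    have e1 : (Tᴴ * ρ * T).trace = ((Gρ * ρ * Gρ) * H').trace := by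
      calc (Tᴴ * ρ * T).trace
          = (T * (Tᴴ * ρ)).trace := Matrix.trace_mul_comm (Tᴴ * ρ) T
        _ = (Gρ * (H' * (Gρ * ρ))).trace := by
            rw [show T * (Tᴴ * ρ) = Gρ * (H' * (Gρ * ρ)) from by
              rw [← Matrix.mul_assoc, hTTh]; noncomm_ring]
        _ = ((H' * (Gρ * ρ)) * Gρ).trace := Matrix.trace_mul_comm Gρ _
        _ = (H' * (Gρ * ρ * Gρ)).trace := by
            rw [show H' * (Gρ * ρ) * Gρ = H' * (Gρ * ρ * Gρ) from by noncomm_ring]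
        _ = ((Gρ * ρ * Gρ) * H').trace := Matrix.trace_mul_comm H' _
    rw [e1]
    have hwle : ((1 : Matrix (Fin q) (Fin q) ℝ) - Gρ * ρ * Gρ).PosSemidef := by
      have hw : Gρ * ρ * Gρ =
          fc hρ.1 (fun x => ((Real.sqrt (x+s^2))⁻¹ * x) * (Real.sqrt (x+s^2))⁻¹) := by
        conv_lhs => rw [← fc_id hρ.1, hGρdef, fc_mul, fc_mul]
      rw [hw, ← fc_one hρ.1, ← fc_sub]
      exact fc_posSemidef _ (fun i => by simpa [mul_assoc] using r6 (hρe i) hs)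
    have hH'psd : H'.PosSemidef := by
      rw [hHdef]; exact fc_posSemidef _ (fun i => Real.sqrt_nonneg _)
    calc ((Gρ * ρ * Gρ) * H').trace = (H' * (Gρ * ρ * Gρ)).trace := Matrix.trace_mul_comm _ _
      _ ≤ (H' * 1).trace := trace_mul_le hH'psd hwle
      _ = ∑ i, Real.sqrt (hXH.eigenvalues i + s^2) := by rw [Matrix.mul_one, hHdef, fc_trace]
      _ ≤ ∑ i, (Real.sqrt (hXH.eigenvalues i) + s) :=
          Finset.sum_le_sum (fun i _ => r1 (hXe i) hs)
      _ = (∑ i, Real.sqrt (hXps.1.eigenvalues i)) + (q:ℝ) * s := by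
          rw [Finset.sum_add_distrib, Finset.sum_const, Finset.card_univ,
            Fintype.card_fin, nsmul_eq_mul]
  have ht2 : (T'ᴴ * P * T').trace ≤ (1+t) * (∑ i, Real.sqrt (hXps.1.eigenvalues i))
      + (1+t⁻¹) * (s⁻¹ * (s^2 * P.trace)) := by
    have e2 : (T'ᴴ * P * T').trace = (GX * (Aδ * P * Aδ)).trace := by
      calc (T'ᴴ * P * T').trace
          = (T' * (T'ᴴ * P)).trace := Matrix.trace_mul_comm (T'ᴴ * P) T'
        _ = (Aδ * (GX * (Aδ * P))).trace := by
            rw [show T' * (T'ᴴ * P) = Aδ * (GX * (Aδ * P)) from by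
              rw [← Matrix.mul_assoc, hT'T'h]; noncomm_ring]
        _ = ((GX * (Aδ * P)) * Aδ).trace := Matrix.trace_mul_comm Aδ _
        _ = (GX * (Aδ * P * Aδ)).trace := by
            rw [show (GX * (Aδ * P)) * Aδ = GX * (Aδ * P * Aδ) from by noncomm_ring]
    set C₀ := t • A - E with hC₀
    have he : C₀ * P * C₀ = (t*t) • (A * P * A) - t • (A * P * E) - t • (E * P * A)
        + E * P * E := by
      rw [hC₀]
      simp only [Matrix.sub_mul, Matrix.mul_sub, smul_mul_assoc, mul_smul_comm, smul_smul]
      module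
    have hred : t⁻¹ • (C₀ * P * C₀) = t • (A * P * A) - (A * P * E) - (E * P * A)
        + t⁻¹ • (E * P * E) := by
      rw [he]
      simp only [smul_sub, smul_add, smul_smul]
      rw [show t⁻¹ * (t * t) = t from by field_simp,
        show t⁻¹ * t = 1 from inv_mul_cancel₀ ht.ne']
      simp only [one_smul]
    have hkey : (1+t) • (A * P * A) + (1+t⁻¹) • (E * P * E) - Aδ * P * Aδ
        = t⁻¹ • (C₀ * P * C₀) := by
      rw [pAE, hred]
      simp only [Matrix.add_mul, Matrix.mul_add]
      module
    have hC₀h : C₀ᴴ = C₀ := by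
      rw [hC₀, Matrix.conjTranspose_sub, Matrix.conjTranspose_smul, hAdef, hEdef,
        fc_herm, fc_herm]
      simp
    have hCPC : (t⁻¹ • (C₀ * P * C₀)).PosSemidef := by
      have h := hP.mul_mul_conjTranspose_same C₀
      rw [hC₀h] at h
      exact psd_smul h (by positivity)
    have hGXpsd : GX.PosSemidef := by
      rw [hGXdef]; exact fc_posSemidef _ (fun i => by positivity)
    have hdiff : ((1+t) • (A * P * A) + (1+t⁻¹) • (E * P * E) - Aδ * P * Aδ).PosSemidef := by
      rw [hkey]; exact hCPC
    have hstep : (GX * (Aδ * P * Aδ)).trace ≤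
        (GX * ((1+t) • (A * P * A) + (1+t⁻¹) • (E * P * E))).trace :=
      trace_mul_le hGXpsd hdiff
    have hsplit2 : (GX * ((1+t) • (A * P * A) + (1+t⁻¹) • (E * P * E))).trace
        = (1+t) * (GX * (A * P * A)).trace + (1+t⁻¹) * (GX * (E * P * E)).trace := by
      rw [Matrix.mul_add, Matrix.mul_smul, Matrix.mul_smul, Matrix.trace_add,
        Matrix.trace_smul, Matrix.trace_smul, smul_eq_mul, smul_eq_mul]
    have hGXX : (GX * (A * P * A)).trace ≤ ∑ i, Real.sqrt (hXps.1.eigenvalues i) := by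
      have hX2 : A * P * A = fc hXH (fun x => x) := by
        rw [hAdef, ← sqrt_eq_fc hρ]; exact (fc_id hXH).symm
      rw [hX2, hGXdef, fc_mul, fc_trace]
      exact Finset.sum_le_sum (fun i _ => by rw [mul_comm]; exact r4 (hXe i) hs)
    have hEh : Eᴴ = E := by rw [hEdef, fc_herm]
    have hEPE : (E * P * E).PosSemidef := by
      have h := hP.mul_mul_conjTranspose_same E; rwa [hEh] at h
    have hGXEPE : (GX * (E * P * E)).trace ≤ s⁻¹ * (s^2 * P.trace) := by
      rw [Matrix.trace_mul_comm]
      have hb1 : ((s⁻¹ • (1 : Matrix (Fin q) (Fin q) ℝ)) - GX).PosSemidef := by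
        rw [hGXdef, ← fc_const hXH, ← fc_sub]
        exact fc_posSemidef _ (fun i => sub_nonneg.mpr (r3 (hXe i) hs))
      have htre : ((E * P * E) * (s⁻¹ • (1 : Matrix (Fin q) (Fin q) ℝ))).trace
          = s⁻¹ * (E * P * E).trace := by
        rw [Matrix.mul_smul, Matrix.mul_one, Matrix.trace_smul, smul_eq_mul]
      have hEE : ((s^2 • (1 : Matrix (Fin q) (Fin q) ℝ)) - E * E).PosSemidef := by
        rw [hEdef, fc_mul, ← fc_const hρ.1, ← fc_sub]
        refine fc_posSemidef _ (fun i => ?_)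
        rw [← pow_two]
        have := r2 (hρe i) hs
        linarith
      have htr2 : (E * P * E).trace = (P * (E * E)).trace := by
        rw [Matrix.trace_mul_comm,
          show E * (E * P) = (E * E) * P from by noncomm_ring,
          Matrix.trace_mul_comm]
      calc ((E * P * E) * GX).trace
          ≤ ((E * P * E) * (s⁻¹ • (1 : Matrix (Fin q) (Fin q) ℝ))).trace :=
            trace_mul_le hEPE hb1
        _ = s⁻¹ * (P * (E * E)).trace := by rw [htre, htr2]
        _ ≤ s⁻¹ * (P * (s^2 • (1 : Matrix (Fin q) (Fin q) ℝ))).trace := by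
            exact mul_le_mul_of_nonneg_left (trace_mul_le hP hEE) (by positivity)
        _ = s⁻¹ * (s^2 * P.trace) := by
            rw [Matrix.mul_smul, Matrix.mul_one, Matrix.trace_smul, smul_eq_mul]
    calc (T'ᴴ * P * T').trace = (GX * (Aδ * P * Aδ)).trace := e2
      _ ≤ _ := hstep
      _ = (1+t) * (GX * (A * P * A)).trace + (1+t⁻¹) * (GX * (E * P * E)).trace := hsplit2
      _ ≤ (1+t) * (∑ i, Real.sqrt (hXps.1.eigenvalues i))
            + (1+t⁻¹) * (s⁻¹ * (s^2 * P.trace)) := by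
          have p1 : (0:ℝ) ≤ 1 + t := by linarith
          have p2 : (0:ℝ) ≤ 1 + t⁻¹ := by positivity
          exact add_le_add (mul_le_mul_of_nonneg_left hGXX p1)
            (mul_le_mul_of_nonneg_left hGXEPE p2)
  linarith [hcs0, hcross1, hcross2, ht1, ht2]

end FidelityAux

open Matrix FidelityAux in
/-- Semidefinite programming characterization of fidelity: the supremum of
`Tr((R+Rᵀ)/2)` over blocks `R` making `[[ρ,R],[Rᵀ,P]]` positive semidefinite equals
the fidelity `Tr √(ρ^{1/2} P ρ^{1/2})`. -/
theorem fidelity_sdp {q : ℕ} {ρ P : Matrix (Fin q) (Fin q) ℝ}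
    (hρ : ρ.PosSemidef) (hP : P.PosSemidef) (hρt : ρ.trace = 1) :
    sSup {t : ℝ | ∃ R : Matrix (Fin q) (Fin q) ℝ,
        (Matrix.fromBlocks ρ R Rᵀ P).PosSemidef ∧
        t = (((1 : ℝ) / 2) • (R + Rᵀ)).trace} = fidelity hρ hP := by
  set S := {t : ℝ | ∃ R : Matrix (Fin q) (Fin q) ℝ,
      (Matrix.fromBlocks ρ R Rᵀ P).PosSemidef ∧
      t = (((1 : ℝ) / 2) • (R + Rᵀ)).trace} with hS
  set F := ∑ i, Real.sqrt ((hX_psd hρ hP).1.eigenvalues i) with hF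
  have hfid : fidelity hρ hP = F := by
    have h0 : fidelity hρ hP = ((hX_psd hρ hP).sqrt).trace := rfl
    rw [h0, sqrt_eq_fc (hX_psd hρ hP), fc_trace]
  have hval : ∀ R : Matrix (Fin q) (Fin q) ℝ,
      (((1:ℝ)/2) • (R + Rᵀ)).trace = R.trace := by
    intro R
    rw [Matrix.trace_smul, Matrix.trace_add, Matrix.trace_transpose, smul_eq_mul]
    ring
  have hFnn : 0 ≤ F := Finset.sum_nonneg (fun i _ => Real.sqrt_nonneg _)
  have hPt : 0 ≤ P.trace := trace_nonneg' hP
  have hup : ∀ x ∈ S, x ≤ F := by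
    rintro x ⟨R, hfeas, hxval⟩
    rw [hxval, hval R]
    by_contra hcon
    push_neg at hcon
    set ε := R.trace - F with hε
    have hεpos : 0 < ε := by rw [hε]; linarith
    set t0 := ε / (F + 1) with ht0
    have ht0pos : 0 < t0 := by positivity
    set s0 := ε / ((q:ℝ) + (1 + t0⁻¹) * P.trace + 1) with hs0
    have hden : 0 < (q:ℝ) + (1 + t0⁻¹) * P.trace + 1 := by positivity
    have hs0pos : 0 < s0 := by positivity
    have hcore := upper_core hρ hP R hfeas ht0pos hs0pos
    rw [← hF] at hcore
    have hss : s0⁻¹ * (s0^2 * P.trace) = s0 * P.trace := by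
      field_simp
    rw [hss] at hcore
    have hb1 : t0 * F < ε := by
      rw [ht0, div_mul_eq_mul_div, div_lt_iff₀ (by positivity : (0:ℝ) < F + 1)]
      nlinarith
    have hb2 : (q:ℝ) * s0 + (1 + t0⁻¹) * (s0 * P.trace) ≤ ε := by
      have hre : (q:ℝ) * s0 + (1 + t0⁻¹) * (s0 * P.trace)
          = s0 * ((q:ℝ) + (1 + t0⁻¹) * P.trace) := by ring
      rw [hre, hs0, div_mul_eq_mul_div, div_le_iff₀ hden]
      nlinarith
    have hexpand : (1 + t0) * F = F + t0 * F := by ring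
    linarith [hcore, hb1, hb2]
  have hmemf : ∀ R : Matrix (Fin q) (Fin q) ℝ,
      (Matrix.fromBlocks ρ R Rᵀ P).PosSemidef → R.trace ∈ S := by
    intro R h
    exact ⟨R, h, (hval R).symm⟩
  obtain ⟨R₀, hfeas₀, _⟩ := lower_bound hρ hP one_pos
  have hne : S.Nonempty := ⟨R₀.trace, hmemf R₀ hfeas₀⟩
  have hbdd : BddAbove S := ⟨F, hup⟩
  rw [hfid]
  apply le_antisymm
  · exact csSup_le hne hup
  · by_contra hcon
    push_neg at hcon
    set ε := F - sSup S with hε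
    have hεpos : 0 < ε := by rw [hε]; linarith
    have hspos : 0 < ε / ((q:ℝ) + 1) := by positivity
    obtain ⟨R₁, hfeas₁, hlow⟩ := lower_bound hρ hP hspos
    rw [← hF] at hlow
    have hle := le_csSup hbdd (hmemf R₁ hfeas₁)
    have hq : (q:ℝ) * (ε / ((q:ℝ) + 1)) < ε := by
      rw [mul_div_assoc', div_lt_iff₀ (by positivity : (0:ℝ) < (q:ℝ) + 1)]
      nlinarith
    linarith
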